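/- arXiv:1403.4597 — 10 statements merged into one kernel-verified Lean document; each statement's English description precedes it below -/
import Mathlib

section
/- Lemma 1 (optimal per-epoch structure, time-invariant channel): Suppose (r*, l*) is a global minimizer of the energy E(r, l) over the set of feasible schedules. Then every epoch n ∈ {1, …, N} uses one of three strategies: (i) 'off': l*_n = 0; (ii) 'on-off': r*_n = r_ee and 0 < l*_n ≤ L_n; or (iii) 'on': r*_n > r_ee and l*_n = L_n. Equivalently: for every n with l*_n > 0 one has r*_n ≥ r_ee, and for every n with l*_n > 0 and r*_n > r_ee one has l*_n = L_n. -/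
/-!
Causality and deadline constraints only see the products `r n * l n`, so an optimal schedule
cannot be improved by changing the rate and duration of a single epoch while keeping the number
of bits `b = r n * l n` it carries. Within an epoch such a change costs `b * ξ(r)` instead of
`b * ξ(r n)`. A rate below `r_ee` can thus be raised to `r_ee` (the epoch gets shorter), and a
rate above `r_ee` in an epoch that is not fully used can be lowered towards `r_ee`; since `P` is
convex, `ξ` is strictly increasing on `[r_ee, ∞)`, so both changes save energy. An epoch that is
on at rate `0` only wastes the circuit power `ρ`.
-/

open Real Finset

/-- Transmit-power function `P(r) = (e^r - 1)/g` for channel power gain `g`. -/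
noncomputable def P (g r : ℝ) : ℝ := (Real.exp r - 1) / g

/-- Energy-efficiency (energy-per-bit) ratio `ξ(r) = (P(r) + ρ)/r`. -/
noncomputable def xi (g ρ r : ℝ) : ℝ := (P g r + ρ) / r

/-- Scheduling data: `N ≥ 1` epochs of positive lengths, arrival epoch indices
`0 = α_0 < α_1 < ⋯ < α_A = N` with positive arrival amounts `a_0, …, a_{A-1}` and `a_A = 0`,
deadline epoch indices `0 < δ_1 < ⋯ < δ_D = N` with positive demands `d_1, …, d_D`. -/
def SchedData (N A D : ℕ) (L : ℕ → ℝ) (α : ℕ → ℕ) (a : ℕ → ℝ)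
    (δ : ℕ → ℕ) (d : ℕ → ℝ) : Prop :=
  1 ≤ N ∧ (∀ n ∈ Finset.Icc 1 N, 0 < L n) ∧
  α 0 = 0 ∧ α A = N ∧ (∀ i < A, α i < α (i + 1)) ∧
  (∀ i < A, 0 < a i) ∧ a A = 0 ∧
  0 < δ 1 ∧ δ D = N ∧ (∀ j, 1 ≤ j → j < D → δ j < δ (j + 1)) ∧
  (∀ j ∈ Finset.Icc 1 D, 0 < d j)

/-- Feasibility of a schedule `(r, l)`: box constraints, causality constraints and
deadline constraints. -/
def Feasible (N A D : ℕ) (L : ℕ → ℝ) (α : ℕ → ℕ) (a : ℕ → ℝ)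
    (δ : ℕ → ℕ) (d : ℕ → ℝ) (r l : ℕ → ℝ) : Prop :=
  (∀ n ∈ Finset.Icc 1 N, 0 ≤ r n ∧ 0 ≤ l n ∧ l n ≤ L n) ∧
  (∀ i ∈ Finset.Icc 1 A, ∑ n ∈ Finset.Icc 1 (α i), r n * l n ≤ ∑ k ∈ Finset.range i, a k) ∧
  (∀ j ∈ Finset.Icc 1 D, ∑ k ∈ Finset.Icc 1 j, d k ≤ ∑ n ∈ Finset.Icc 1 (δ j), r n * l n)

theorem ConvexOn.div_lt_div_of_div_lt {c : ℝ → ℝ} (hc : ConvexOn ℝ (Set.Ioi 0) c)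
    {x y z : ℝ} (hx : 0 < x) (hxy : x < y) (hyz : y < z) (h : c x / x < c z / z) :
    c y / y < c z / z := by
  have hy := hx.trans hxy
  have hz := hy.trans hyz
  have hslope := hc.slope_mono_adjacent (Set.mem_Ioi.2 hx) (Set.mem_Ioi.2 hz) hxy hyz
  rw [div_le_div_iff₀ (by linarith) (by linarith)] at hslope
  rw [div_lt_div_iff₀ hx hz] at h
  rw [div_lt_div_iff₀ hy hz]
  nlinarith

theorem ConvexOn.strictMonoOn_div_self_Ici {c : ℝ → ℝ} {ree : ℝ}
    (hc : ConvexOn ℝ (Set.Ioi 0) c) (hree : 0 < ree)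
    (hmin : ∀ r, 0 < r → r ≠ ree → c ree / ree < c r / r) :
    StrictMonoOn (fun r => c r / r) (Set.Ici ree) := by
  intro y hy z hz hyz
  rcases (Set.mem_Ici.1 hy).eq_or_lt with rfl | hy'
  · exact hmin z (hree.trans hyz) hyz.ne'
  · have hz' := hy'.trans hyz
    exact hc.div_lt_div_of_div_lt hree hy' hyz (hmin z (hree.trans hz') hz'.ne')

theorem convexOn_P_add {g : ℝ} (hg : 0 < g) (ρ : ℝ) : ConvexOn ℝ Set.univ fun r => P g r + ρ := by
  refine ((convexOn_exp.smul (inv_nonneg.2 hg.le)).add_const (ρ - g⁻¹)).congr fun r _ => ?_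
  simp only [P, smul_eq_mul, Pi.add_apply]
  ring

def EpochOptimal (c : ℝ → ℝ) (L r l : ℝ) : Prop :=
  ∀ r' l', 0 ≤ r' → 0 ≤ l' → l' ≤ L → r' * l' = r * l → c r * l ≤ c r' * l'

namespace EpochOptimal

variable {c : ℝ → ℝ} {ree L r l : ℝ}

theorem div_le_div (h : EpochOptimal c L r l) (hr : 0 < r) (hl : 0 < l) {r' : ℝ} (hr' : 0 < r')
    (hfit : r * l / r' ≤ L) : c r / r ≤ c r' / r' := by
  have hle := h r' (r * l / r') hr'.le (by positivity) hfit (by field_simp)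
  have hrl : 0 < r * l := mul_pos hr hl
  refine le_of_mul_le_mul_right ?_ hrl
  calc c r / r * (r * l) = c r * l := by field_simp
    _ ≤ c r' * (r * l / r') := hle
    _ = c r' / r' * (r * l) := by ring

variable (hree : 0 < ree) (hmin : ∀ r, 0 < r → r ≠ ree → c ree / ree < c r / r)
include hree hmin

theorem le_rate (h : EpochOptimal c L r l) (hc0 : 0 < c 0) (hr : 0 ≤ r) (hl : 0 < l)
    (hlL : l ≤ L) : ree ≤ r := by
  by_contra! hlt
  rcases hr.eq_or_lt with rfl | hr
  · have hoff := h 0 0 le_rfl le_rfl (hl.le.trans hlL) (by simp)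
    nlinarith
  · refine (hmin r hr hlt.ne).not_ge (h.div_le_div hr hl hree ?_)
    rw [div_le_iff₀ hree]
    nlinarith

theorem length_eq (h : EpochOptimal c L r l) (hc : ConvexOn ℝ (Set.Ioi 0) c) (hl : 0 < l)
    (hlL : l ≤ L) (hr : ree < r) : l = L := by
  by_contra hne
  have hlL := hlL.lt_of_ne hne
  have hL := hl.trans hlL
  set r' := max ree (r * l / L)
  have hr' : ree ≤ r' := le_max_left _ _
  have hr'r : r' < r := max_lt hr (by rw [div_lt_iff₀ hL]; nlinarith)
  have hfit : r * l / r' ≤ L := by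
    have := (div_le_iff₀ hL).1 (le_max_right ree (r * l / L))
    rw [div_le_iff₀ (hree.trans_le hr')]
    linarith
  exact (hc.strictMonoOn_div_self_Ici hree hmin hr' hr.le hr'r).not_ge
    (h.div_le_div (hree.trans hr) hl (hree.trans_le hr') hfit)

end EpochOptimal

theorem Feasible.update {N A D : ℕ} {L : ℕ → ℝ} {α : ℕ → ℕ} {a : ℕ → ℝ} {δ : ℕ → ℕ}
    {d r l : ℕ → ℝ} (h : Feasible N A D L α a δ d r l) {n : ℕ} (hn : n ∈ Icc 1 N) {r' l' : ℝ}
    (hr' : 0 ≤ r') (hl' : 0 ≤ l') (hl'L : l' ≤ L n) (hrl : r' * l' = r n * l n) :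
    Feasible N A D L α a δ d (Function.update r n r') (Function.update l n l') := by
  have hprod : ∀ m, Function.update r n r' m * Function.update l n l' m = r m * l m := by
    intro m
    rcases eq_or_ne m n with rfl | hm
    · simpa using hrl
    · simp [Function.update_of_ne hm]
  obtain ⟨hbox, hcaus, hdl⟩ := h
  refine ⟨fun m hm => ?_, by simpa only [hprod] using hcaus, by simpa only [hprod] using hdl⟩
  rcases eq_or_ne m n with rfl | hmn
  · simpa using ⟨hr', hl', hl'L⟩
  · simpa [Function.update_of_ne hmn] using hbox m hm

theorem Feasible.epochOptimal_of_isMin {N A D : ℕ} {L : ℕ → ℝ} {α : ℕ → ℕ} {a : ℕ → ℝ}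
    {δ : ℕ → ℕ} {d rs ls : ℕ → ℝ} {c : ℝ → ℝ} (hfeas : Feasible N A D L α a δ d rs ls)
    (hopt : ∀ r l : ℕ → ℝ, Feasible N A D L α a δ d r l →
      ∑ n ∈ Icc 1 N, c (rs n) * ls n ≤ ∑ n ∈ Icc 1 N, c (r n) * l n)
    {n : ℕ} (hn : n ∈ Icc 1 N) : EpochOptimal c (L n) (rs n) (ls n) := by
  intro r' l' hr' hl' hl'L hrl
  have hle := hopt _ _ (hfeas.update hn hr' hl' hl'L hrl)
  have hupd : ∀ m, c (Function.update rs n r' m) * Function.update ls n l' m =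
      Function.update (fun m => c (rs m) * ls m) n (c r' * l') m := by
    intro m
    rcases eq_or_ne m n with rfl | hm
    · simp
    · simp [Function.update_of_ne hm]
  rw [Finset.sum_congr rfl fun m _ => hupd m, Finset.sum_update_of_mem hn,
    Finset.sum_eq_add_sum_sdiff_singleton_of_mem hn] at hle
  linarith

theorem lemma1_time_invariant_general
    (g ρ ree : ℝ) (hg : 0 < g) (hρ : 0 < ρ)
    (hree_pos : 0 < ree)
    (hree_min : ∀ r : ℝ, 0 < r → r ≠ ree → xi g ρ ree < xi g ρ r)
    (N A D : ℕ) (L : ℕ → ℝ) (α : ℕ → ℕ) (a : ℕ → ℝ) (δ : ℕ → ℕ) (d : ℕ → ℝ)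
    (rs ls : ℕ → ℝ)
    (hfeas : Feasible N A D L α a δ d rs ls)
    (hopt : ∀ r l : ℕ → ℝ, Feasible N A D L α a δ d r l →
      ∑ n ∈ Finset.Icc 1 N, (P g (rs n) + ρ) * ls n ≤
        ∑ n ∈ Finset.Icc 1 N, (P g (r n) + ρ) * l n) :
    ∀ n ∈ Finset.Icc 1 N,
      (ls n = 0 ∨ (rs n = ree ∧ 0 < ls n ∧ ls n ≤ L n) ∨ (ree < rs n ∧ ls n = L n)) ∧
      (0 < ls n → ree ≤ rs n) ∧
      (0 < ls n → ree < rs n → ls n = L n) := by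
  intro n hn
  obtain ⟨hr, hl, hlL⟩ := hfeas.1 n hn
  have hepoch : EpochOptimal (fun r => P g r + ρ) (L n) (rs n) (ls n) :=
    hfeas.epochOptimal_of_isMin hopt hn
  have hc0 : 0 < P g 0 + ρ := by simpa [P] using hρ
  have hconv := (convexOn_P_add hg ρ).subset (Set.subset_univ _) (convex_Ioi 0)
  have hrate : 0 < ls n → ree ≤ rs n := fun hpos =>
    hepoch.le_rate hree_pos hree_min hc0 hr hpos hlL
  have hfull : 0 < ls n → ree < rs n → ls n = L n := fun hpos hgt =>
    hepoch.length_eq hree_pos hree_min hconv hpos hlL hgt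
  refine ⟨?_, hrate, hfull⟩
  rcases hl.eq_or_lt with hoff | hpos
  · exact .inl hoff.symm
  rcases (hrate hpos).eq_or_lt with hee | hgt
  · exact .inr (.inl ⟨hee.symm, hpos, hlL⟩)
  · exact .inr (.inr ⟨hgt, hfull hpos hgt⟩)

/-- **Lemma 1** (optimal per-epoch structure, time-invariant channel).
If `(rs, ls)` is a global minimizer of the total energy over the feasible schedules,
then every epoch uses one of three strategies: "off" (`ls n = 0`), "on-off"
(`rs n = r_ee` and `0 < ls n ≤ L n`), or "on" (`rs n > r_ee` and `ls n = L n`).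
Equivalently: whenever `ls n > 0` one has `rs n ≥ r_ee`, and whenever moreover
`rs n > r_ee` one has `ls n = L n`. -/
theorem lemma1_time_invariant
    (g ρ ree : ℝ) (hg : 0 < g) (hρ : 0 < ρ)
    (hree_pos : 0 < ree)
    (hree_min : ∀ r : ℝ, 0 < r → r ≠ ree → xi g ρ ree < xi g ρ r)
    (N A D : ℕ) (L : ℕ → ℝ) (α : ℕ → ℕ) (a : ℕ → ℝ) (δ : ℕ → ℕ) (d : ℕ → ℝ)
    (hdata : SchedData N A D L α a δ d)
    (rs ls : ℕ → ℝ)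
    (hfeas : Feasible N A D L α a δ d rs ls)
    (hopt : ∀ r l : ℕ → ℝ, Feasible N A D L α a δ d r l →
      ∑ n ∈ Finset.Icc 1 N, (P g (rs n) + ρ) * ls n ≤
        ∑ n ∈ Finset.Icc 1 N, (P g (r n) + ρ) * l n) :
    ∀ n ∈ Finset.Icc 1 N,
      (ls n = 0 ∨ (rs n = ree ∧ 0 < ls n ∧ ls n ≤ L n) ∨ (ree < rs n ∧ ls n = L n)) ∧
      (0 < ls n → ree ≤ rs n) ∧
      (0 < ls n → ree < rs n → ls n = L n) :=
  lemma1_time_invariant_general g ρ ree hg hρ hree_pos hree_min N A D L α a δ d rs ls hfeas hopt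
end

section
/- Lemma 2 (rate-change structure under KKT, time-invariant channel): Suppose (r*, l*, λ, μ) satisfies the KKT conditions. Let n ∈ {1, …, N−1} be an epoch with l*_n > 0 and l*_{n+1} > 0. If r*_{n+1} > r*_n, then there exists an index i ∈ {1, …, A} with α_i = n, λ_i > 0, and the i-th causality constraint tight: Σ_{m=1}^{α_i} r*_m l*_m = Σ_{k=0}^{i−1} a_k. If r*_{n+1} < r*_n, then there exists an index j ∈ {1, …, D} with δ_j = n, μ_j > 0, and the j-th deadline constraint tight: Σ_{m=1}^{δ_j} r*_m l*_m = Σ_{k=1}^{j} d_k. -/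
open Real Finset

/-- The weight (water-level) `w_n = Σ_{j : δ_j ≥ n} μ_j - Σ_{i : α_i ≥ n} λ_i`. -/
noncomputable def weight (A D : ℕ) (α : ℕ → ℕ) (δ : ℕ → ℕ) (lam μ : ℕ → ℝ) (n : ℕ) : ℝ :=
  ∑ j ∈ (Finset.Icc 1 D).filter (fun j => n ≤ δ j), μ j -
    ∑ i ∈ (Finset.Icc 1 A).filter (fun i => n ≤ α i), lam i

/-- KKT conditions for the time-invariant problem (3): feasibility, nonnegative multipliers,
per-epoch Lagrangian minimality of `(r*_n, l*_n)`, and complementary slackness. -/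
def KKT (g ρ : ℝ) (N A D : ℕ) (L : ℕ → ℝ) (α : ℕ → ℕ) (a : ℕ → ℝ)
    (δ : ℕ → ℕ) (d : ℕ → ℝ) (rs ls lam μ : ℕ → ℝ) : Prop :=
  Feasible N A D L α a δ d rs ls ∧
  (∀ i ∈ Finset.Icc 1 A, 0 ≤ lam i) ∧
  (∀ j ∈ Finset.Icc 1 D, 0 ≤ μ j) ∧
  (∀ n ∈ Finset.Icc 1 N, ∀ r' l' : ℝ, 0 ≤ r' → 0 ≤ l' → l' ≤ L n →
    (P g (rs n) + ρ - weight A D α δ lam μ n * rs n) * ls n ≤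
      (P g r' + ρ - weight A D α δ lam μ n * r') * l') ∧
  (∀ i ∈ Finset.Icc 1 A,
    lam i * (∑ n ∈ Finset.Icc 1 (α i), rs n * ls n - ∑ k ∈ Finset.range i, a k) = 0) ∧
  (∀ j ∈ Finset.Icc 1 D,
    μ j * (∑ n ∈ Finset.Icc 1 (δ j), rs n * ls n - ∑ k ∈ Finset.Icc 1 j, d k) = 0)

lemma key_strict (g : ℝ) (hg : 0 < g) (a b w1 w2 : ℝ) (ha : 0 ≤ a) (hab : a < b)
    (h1 : ∀ r, 0 ≤ r → (Real.exp a - 1)/g - w1*a ≤ (Real.exp r - 1)/g - w1*r)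
    (h2 : ∀ r, 0 ≤ r → (Real.exp b - 1)/g - w2*b ≤ (Real.exp r - 1)/g - w2*r) :
    w1 < w2 := by
  by_contra hle
  push_neg at hle
  have hb : 0 ≤ b := le_of_lt (lt_of_le_of_lt ha hab)
  have e1 := h1 b hb
  have e2 := h2 a ha
  set m := (a+b)/2 with hmdef
  have hm : (0:ℝ) ≤ m := by rw [hmdef]; linarith
  have em := h1 m hm
  have hw : w1 * m = (w1*a + w1*b)/2 := by rw [hmdef]; ring
  have hconv : Real.exp m < (Real.exp a + Real.exp b)/2 := by
    have h := strictConvexOn_exp.2 (Set.mem_univ a) (Set.mem_univ b) (ne_of_lt hab)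
      one_half_pos one_half_pos (by norm_num)
    simp only [smul_eq_mul] at h
    have hx : (1/2:ℝ)*a + (1/2)*b = m := by rw [hmdef]; ring
    rw [hx] at h
    linarith
  have hg' : (0:ℝ) < g⁻¹ := inv_pos.mpr hg
  have hconv2 : Real.exp m * g⁻¹ < (Real.exp a + Real.exp b)/2 * g⁻¹ :=
    mul_lt_mul_of_pos_right hconv hg'
  have hmul : w2 * (b - a) ≤ w1 * (b - a) :=
    mul_le_mul_of_nonneg_right hle (by linarith)
  simp only [div_eq_mul_inv] at e1 e2 em
  linarith [hconv2, hmul, e1, e2, em, hw]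

lemma sum_filter_split {s : Finset ℕ} (f : ℕ → ℕ) (c : ℕ → ℝ) (n : ℕ) :
    ∑ i ∈ s.filter (fun i => n ≤ f i), c i =
      ∑ i ∈ s.filter (fun i => n+1 ≤ f i), c i +
        ∑ i ∈ s.filter (fun i => f i = n), c i := by
  rw [← Finset.sum_filter_add_sum_filter_not (s.filter (fun i => n ≤ f i))
    (fun i => n+1 ≤ f i)]
  rw [Finset.filter_filter, Finset.filter_filter]
  congr 1
  · apply Finset.sum_congr _ (fun _ _ => rfl)
    ext i; simp only [Finset.mem_filter]
    constructor
    · rintro ⟨hs, h⟩; exact ⟨hs, h.2⟩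
    · rintro ⟨hs, h⟩; exact ⟨hs, by omega, h⟩
  · apply Finset.sum_congr _ (fun _ _ => rfl)
    ext i; simp only [Finset.mem_filter]
    constructor
    · rintro ⟨hs, h⟩; exact ⟨hs, by omega⟩
    · rintro ⟨hs, h⟩; exact ⟨hs, by omega, by omega⟩

/-- **Lemma 2** (rate-change structure under KKT, time-invariant channel).
Suppose `(rs, ls, lam, μ)` satisfies the KKT conditions, and let `n` be an epoch with
`1 ≤ n < N`, `ls n > 0` and `ls (n+1) > 0`. If the rate increases after epoch `n`,
then some arrival index `i` has `α i = n`, `λ i > 0` and the `i`-th causality constraint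
tight; if the rate decreases, then some deadline index `j` has `δ j = n`, `μ j > 0` and
the `j`-th deadline constraint tight. -/
theorem lemma2_rate_change
    (g ρ : ℝ) (hg : 0 < g) (hρ : 0 < ρ)
    (N A D : ℕ) (L : ℕ → ℝ) (α : ℕ → ℕ) (a : ℕ → ℝ) (δ : ℕ → ℕ) (d : ℕ → ℝ)
    (hdata : SchedData N A D L α a δ d)
    (rs ls lam μ : ℕ → ℝ)
    (hkkt : KKT g ρ N A D L α a δ d rs ls lam μ)
    (n : ℕ) (hn1 : 1 ≤ n) (hnN : n + 1 ≤ N)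
    (hln : 0 < ls n) (hln1 : 0 < ls (n + 1)) :
    (rs n < rs (n + 1) →
      ∃ i, 1 ≤ i ∧ i ≤ A ∧ α i = n ∧ 0 < lam i ∧
        ∑ m ∈ Finset.Icc 1 (α i), rs m * ls m = ∑ k ∈ Finset.range i, a k) ∧
    (rs (n + 1) < rs n →
      ∃ j, 1 ≤ j ∧ j ≤ D ∧ δ j = n ∧ 0 < μ j ∧
        ∑ m ∈ Finset.Icc 1 (δ j), rs m * ls m = ∑ k ∈ Finset.Icc 1 j, d k) := by
  obtain ⟨⟨hfeas, hcaus, hdead⟩, hlam, hmu, hmin, hcsA, hcsD⟩ := hkkt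
  have hmemn : n ∈ Finset.Icc 1 N := by simp [Finset.mem_Icc]; omega
  have hmemn1 : n + 1 ∈ Finset.Icc 1 N := by simp [Finset.mem_Icc]; omega
  obtain ⟨hrn, hlsn, hLn⟩ := hfeas n hmemn
  obtain ⟨hrn1, hlsn1, hLn1⟩ := hfeas (n+1) hmemn1
  have hmin' : ∀ m, m ∈ Finset.Icc 1 N → 0 < ls m → ∀ r', 0 ≤ r' →
      (Real.exp (rs m) - 1)/g - weight A D α δ lam μ m * rs m ≤
        (Real.exp r' - 1)/g - weight A D α δ lam μ m * r' := by
    intro m hm hls r' hr'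
    obtain ⟨_, hl0, hlL⟩ := hfeas m hm
    have h := hmin m hm r' (ls m) hr' hl0 hlL
    have h2 : P g (rs m) + ρ - weight A D α δ lam μ m * rs m ≤
        P g r' + ρ - weight A D α δ lam μ m * r' := le_of_mul_le_mul_right h hls
    unfold P at h2
    linarith
  have hdiff : weight A D α δ lam μ n - weight A D α δ lam μ (n+1) =
      (∑ j ∈ (Finset.Icc 1 D).filter (fun j => δ j = n), μ j) -
      (∑ i ∈ (Finset.Icc 1 A).filter (fun i => α i = n), lam i) := by
    unfold weight
    rw [sum_filter_split δ μ n, sum_filter_split α lam n]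
    ring
  constructor
  · intro hr
    have hw : weight A D α δ lam μ n < weight A D α δ lam μ (n+1) :=
      key_strict g hg (rs n) (rs (n+1)) _ _ hrn hr
        (hmin' n hmemn hln) (hmin' (n+1) hmemn1 hln1)
    have hT : 0 ≤ ∑ j ∈ (Finset.Icc 1 D).filter (fun j => δ j = n), μ j :=
      Finset.sum_nonneg (fun j hj => hmu j (Finset.mem_of_mem_filter j hj))
    have hS : 0 < ∑ i ∈ (Finset.Icc 1 A).filter (fun i => α i = n), lam i := by
      linarith [hdiff]
    have : ∃ i ∈ (Finset.Icc 1 A).filter (fun i => α i = n), 0 < lam i := by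
      by_contra hcon
      push_neg at hcon
      have : ∑ i ∈ (Finset.Icc 1 A).filter (fun i => α i = n), lam i ≤ 0 :=
        Finset.sum_nonpos hcon
      linarith
    obtain ⟨i, hi, hlami⟩ := this
    rw [Finset.mem_filter, Finset.mem_Icc] at hi
    refine ⟨i, hi.1.1, hi.1.2, hi.2, hlami, ?_⟩
    have hcs := hcsA i (Finset.mem_Icc.mpr ⟨hi.1.1, hi.1.2⟩)
    rcases mul_eq_zero.mp hcs with h | h
    · exact absurd h (ne_of_gt hlami)
    · linarith [sub_eq_zero.mp h]
  · intro hr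
    have hw : weight A D α δ lam μ (n+1) < weight A D α δ lam μ n :=
      key_strict g hg (rs (n+1)) (rs n) _ _ hrn1 hr
        (hmin' (n+1) hmemn1 hln1) (hmin' n hmemn hln)
    have hS : 0 ≤ ∑ i ∈ (Finset.Icc 1 A).filter (fun i => α i = n), lam i :=
      Finset.sum_nonneg (fun i hi => hlam i (Finset.mem_of_mem_filter i hi))
    have hT : 0 < ∑ j ∈ (Finset.Icc 1 D).filter (fun j => δ j = n), μ j := by
      linarith [hdiff]
    have : ∃ j ∈ (Finset.Icc 1 D).filter (fun j => δ j = n), 0 < μ j := by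
      by_contra hcon
      push_neg at hcon
      have : ∑ j ∈ (Finset.Icc 1 D).filter (fun j => δ j = n), μ j ≤ 0 :=
        Finset.sum_nonpos hcon
      linarith
    obtain ⟨j, hj, hmuj⟩ := this
    rw [Finset.mem_filter, Finset.mem_Icc] at hj
    refine ⟨j, hj.1.1, hj.1.2, hj.2, hmuj, ?_⟩
    have hcs := hcsD j (Finset.mem_Icc.mpr ⟨hj.1.1, hj.1.2⟩)
    rcases mul_eq_zero.mp hcs with h | h
    · exact absurd h (ne_of_gt hmuj)
    · linarith [sub_eq_zero.mp h]
end

section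
/- KKT sufficiency for the time-invariant problem (optimality conditions (9)–(11)): If (r*, l*, λ, μ) satisfies the KKT conditions with λ_i ≥ 0 for all i and μ_j ≥ 0 for all j, then (r*, l*) is a global minimizer: for every feasible schedule (r, l), Σ_{n=1}^N (P(r*_n) + ρ) l*_n ≤ Σ_{n=1}^N (P(r_n) + ρ) l_n. -/
open Real Finset

lemma filter_Icc_le_eq {N m : ℕ} (h : m ≤ N) :
    (Finset.Icc 1 N).filter (fun n => n ≤ m) = Finset.Icc 1 m := by
  ext n; simp only [Finset.mem_filter, Finset.mem_Icc]; omega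

lemma swap_sum (A N : ℕ) (α : ℕ → ℕ) (hα : ∀ i ∈ Finset.Icc 1 A, α i ≤ N)
    (c x : ℕ → ℝ) :
    ∑ i ∈ Finset.Icc 1 A, c i * ∑ n ∈ Finset.Icc 1 (α i), x n
      = ∑ n ∈ Finset.Icc 1 N,
          (∑ i ∈ (Finset.Icc 1 A).filter (fun i => n ≤ α i), c i) * x n := by
  have h1 : ∀ i ∈ Finset.Icc 1 A,
      c i * ∑ n ∈ Finset.Icc 1 (α i), x n
        = ∑ n ∈ Finset.Icc 1 N, if n ≤ α i then c i * x n else 0 := by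
    intro i hi
    rw [← filter_Icc_le_eq (hα i hi), Finset.mul_sum, Finset.sum_filter]
  rw [Finset.sum_congr rfl h1, Finset.sum_comm]
  refine Finset.sum_congr rfl fun n _ => ?_
  rw [Finset.sum_mul, Finset.sum_filter]

/-- **KKT sufficiency** for the time-invariant problem (optimality conditions (9)–(11)):
if `(rs, ls, lam, μ)` satisfies the KKT conditions (with nonnegative multipliers), then
`(rs, ls)` is a global minimizer of the total energy among all feasible schedules. -/
theorem kkt_sufficiency_time_invariant
    (g ρ : ℝ) (hg : 0 < g) (hρ : 0 < ρ)
    (N A D : ℕ) (L : ℕ → ℝ) (α : ℕ → ℕ) (a : ℕ → ℝ) (δ : ℕ → ℕ) (d : ℕ → ℝ)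
    (hdata : SchedData N A D L α a δ d)
    (rs ls lam μ : ℕ → ℝ)
    (hkkt : KKT g ρ N A D L α a δ d rs ls lam μ) :
    ∀ r l : ℕ → ℝ, Feasible N A D L α a δ d r l →
      ∑ n ∈ Finset.Icc 1 N, (P g (rs n) + ρ) * ls n ≤
        ∑ n ∈ Finset.Icc 1 N, (P g (r n) + ρ) * l n := by
  obtain ⟨hN, hL, hα0, hαA, hαmono, ha, haA, hδ1, hδD, hδmono, hd⟩ := hdata
  obtain ⟨hfstar, hlam, hmu, hstat, hcsl, hcsm⟩ := hkkt
  intro r l hfeas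
  -- α i ≤ N for i ∈ [1, A]
  have hαle : ∀ i ∈ Finset.Icc 1 A, α i ≤ N := by
    have key : ∀ m k, k + m ≤ A → α k ≤ α (k + m) := by
      intro m
      induction m with
      | zero => intro k _; simp
      | succ m ih =>
        intro k hk
        have h1 := ih k (by omega)
        have h2 := hαmono (k + m) (by omega)
        exact le_trans h1 (le_of_lt h2)
    intro i hi
    simp only [Finset.mem_Icc] at hi
    have := key (A - i) i (by omega)
    rw [show i + (A - i) = A by omega, hαA] at this
    exact this
  have hδle : ∀ j ∈ Finset.Icc 1 D, δ j ≤ N := by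
    have key : ∀ m k, 1 ≤ k → k + m ≤ D → δ k ≤ δ (k + m) := by
      intro m
      induction m with
      | zero => intro k _ _; simp
      | succ m ih =>
        intro k hk1 hk
        have h1 := ih k hk1 (by omega)
        have h2 := hδmono (k + m) (by omega) (by omega)
        exact le_trans h1 (le_of_lt h2)
    intro j hj
    simp only [Finset.mem_Icc] at hj
    have := key (D - j) j hj.1 (by omega)
    rw [show j + (D - j) = D by omega, hδD] at this
    exact this
  -- weighted-sum identity
  have hw : ∀ x : ℕ → ℝ,
      ∑ n ∈ Finset.Icc 1 N, weight A D α δ lam μ n * x n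
        = (∑ j ∈ Finset.Icc 1 D, μ j * ∑ n ∈ Finset.Icc 1 (δ j), x n)
          - ∑ i ∈ Finset.Icc 1 A, lam i * ∑ n ∈ Finset.Icc 1 (α i), x n := by
    intro x
    simp only [weight, sub_mul]
    rw [Finset.sum_sub_distrib, ← swap_sum D N δ hδle μ x, ← swap_sum A N α hαle lam x]
  -- constant T
  set T : ℝ := (∑ j ∈ Finset.Icc 1 D, μ j * ∑ k ∈ Finset.Icc 1 j, d k)
      - ∑ i ∈ Finset.Icc 1 A, lam i * ∑ k ∈ Finset.range i, a k with hT
  -- complementary slackness : weighted sum for (rs, ls) equals T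
  have h1 : ∑ n ∈ Finset.Icc 1 N, weight A D α δ lam μ n * (rs n * ls n) = T := by
    rw [hw, hT]
    have e1 : ∑ j ∈ Finset.Icc 1 D, μ j * ∑ n ∈ Finset.Icc 1 (δ j), rs n * ls n
        = ∑ j ∈ Finset.Icc 1 D, μ j * ∑ k ∈ Finset.Icc 1 j, d k := by
      refine Finset.sum_congr rfl fun j hj => ?_
      have h := hcsm j hj
      rw [mul_sub] at h
      linarith
    have e2 : ∑ i ∈ Finset.Icc 1 A, lam i * ∑ n ∈ Finset.Icc 1 (α i), rs n * ls n
        = ∑ i ∈ Finset.Icc 1 A, lam i * ∑ k ∈ Finset.range i, a k := by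
      refine Finset.sum_congr rfl fun i hi => ?_
      have h := hcsl i hi
      rw [mul_sub] at h
      linarith
    rw [e1, e2]
  -- weighted sum for feasible (r, l) is at least T
  have h2 : T ≤ ∑ n ∈ Finset.Icc 1 N, weight A D α δ lam μ n * (r n * l n) := by
    rw [hw, hT]
    have e1 : ∑ j ∈ Finset.Icc 1 D, μ j * ∑ k ∈ Finset.Icc 1 j, d k
        ≤ ∑ j ∈ Finset.Icc 1 D, μ j * ∑ n ∈ Finset.Icc 1 (δ j), r n * l n :=
      Finset.sum_le_sum fun j hj =>
        mul_le_mul_of_nonneg_left (hfeas.2.2 j hj) (hmu j hj)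
    have e2 : ∑ i ∈ Finset.Icc 1 A, lam i * ∑ n ∈ Finset.Icc 1 (α i), r n * l n
        ≤ ∑ i ∈ Finset.Icc 1 A, lam i * ∑ k ∈ Finset.range i, a k :=
      Finset.sum_le_sum fun i hi =>
        mul_le_mul_of_nonneg_left (hfeas.2.1 i hi) (hlam i hi)
    linarith
  -- per-epoch stationarity, summed
  have h3 : ∑ n ∈ Finset.Icc 1 N,
        (P g (rs n) + ρ - weight A D α δ lam μ n * rs n) * ls n
      ≤ ∑ n ∈ Finset.Icc 1 N,
        (P g (r n) + ρ - weight A D α δ lam μ n * r n) * l n := by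
    refine Finset.sum_le_sum fun n hn => ?_
    obtain ⟨hr, hl, hlL⟩ := hfeas.1 n hn
    exact hstat n hn (r n) (l n) hr hl hlL
  have expand : ∀ x y : ℕ → ℝ,
      ∑ n ∈ Finset.Icc 1 N, (P g (x n) + ρ - weight A D α δ lam μ n * x n) * y n
        = ∑ n ∈ Finset.Icc 1 N, (P g (x n) + ρ) * y n
          - ∑ n ∈ Finset.Icc 1 N, weight A D α δ lam μ n * (x n * y n) := by
    intro x y
    rw [← Finset.sum_sub_distrib]
    exact Finset.sum_congr rfl fun n _ => by ring
  rw [expand rs ls, expand r l] at h3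
  linarith
end

section
/- KKT sufficiency for the time-varying problem (optimality conditions (25)–(27)): If (r*, l*, λ, μ) satisfies the time-varying KKT conditions with λ_i ≥ 0 for all i and μ_j ≥ 0 for all j, then (r*, l*) is a global minimizer: for every feasible schedule (r, l), Σ_{n=1}^N ((e^{r*_n} − 1)/g_n + ρ) l*_n ≤ Σ_{n=1}^N ((e^{r_n} − 1)/g_n + ρ) l_n. -/
open Real Finset

/-- Time-varying KKT conditions for problem (22): feasibility, nonnegative multipliers,
per-epoch Lagrangian minimality of `(r*_n, l*_n)` (with per-epoch gain `g n`), and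
complementary slackness. -/
def KKTtv (ρ : ℝ) (g : ℕ → ℝ) (N A D : ℕ) (L : ℕ → ℝ) (α : ℕ → ℕ) (a : ℕ → ℝ)
    (δ : ℕ → ℕ) (d : ℕ → ℝ) (rs ls lam μ : ℕ → ℝ) : Prop :=
  Feasible N A D L α a δ d rs ls ∧
  (∀ i ∈ Finset.Icc 1 A, 0 ≤ lam i) ∧
  (∀ j ∈ Finset.Icc 1 D, 0 ≤ μ j) ∧
  (∀ n ∈ Finset.Icc 1 N, ∀ r' l' : ℝ, 0 ≤ r' → 0 ≤ l' → l' ≤ L n →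
    (P (g n) (rs n) + ρ - weight A D α δ lam μ n * rs n) * ls n ≤
      (P (g n) r' + ρ - weight A D α δ lam μ n * r') * l') ∧
  (∀ i ∈ Finset.Icc 1 A,
    lam i * (∑ n ∈ Finset.Icc 1 (α i), rs n * ls n - ∑ k ∈ Finset.range i, a k) = 0) ∧
  (∀ j ∈ Finset.Icc 1 D,
    μ j * (∑ n ∈ Finset.Icc 1 (δ j), rs n * ls n - ∑ k ∈ Finset.Icc 1 j, d k) = 0)

/-- Monotonicity from strictly increasing steps on `[1,B]`. -/
lemma kkt_mono_aux (β : ℕ → ℕ) :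
    ∀ B : ℕ, (∀ j, 1 ≤ j → j < B → β j < β (j + 1)) →
      ∀ j, 1 ≤ j → j ≤ B → β j ≤ β B := by
  intro B
  induction B with
  | zero => intro _ j hj hjB; omega
  | succ B ih =>
    intro h j hj hjB
    rcases Nat.lt_or_ge j (B + 1) with h1 | h1
    · exact le_trans (ih (fun m hm hm' => h m hm (by omega)) j hj (by omega))
        (le_of_lt (h B (by omega) (by omega)))
    · have : j = B + 1 := by omega
      simp [this]

/-- Double-counting / sum swap. -/
lemma kkt_swap (M B : ℕ) (β : ℕ → ℕ) (hβ : ∀ i ∈ Finset.Icc 1 B, β i ≤ M) (c x : ℕ → ℝ) :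
    ∑ i ∈ Finset.Icc 1 B, c i * ∑ n ∈ Finset.Icc 1 (β i), x n
      = ∑ n ∈ Finset.Icc 1 M,
          (∑ i ∈ (Finset.Icc 1 B).filter (fun i => n ≤ β i), c i) * x n := by
  have h1 : ∀ i ∈ Finset.Icc 1 B,
      Finset.Icc 1 (β i) = (Finset.Icc 1 M).filter (fun n => n ≤ β i) := by
    intro i hi
    have := hβ i hi
    ext n
    simp only [Finset.mem_Icc, Finset.mem_filter]
    omega
  calc ∑ i ∈ Finset.Icc 1 B, c i * ∑ n ∈ Finset.Icc 1 (β i), x n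
      = ∑ i ∈ Finset.Icc 1 B, c i * ∑ n ∈ (Finset.Icc 1 M).filter (fun n => n ≤ β i), x n :=
        Finset.sum_congr rfl (fun i hi => by rw [h1 i hi])
    _ = ∑ n ∈ Finset.Icc 1 M,
          (∑ i ∈ (Finset.Icc 1 B).filter (fun i => n ≤ β i), c i) * x n := by
        simp_rw [Finset.sum_filter, Finset.mul_sum, Finset.sum_mul]
        rw [Finset.sum_comm]
        refine Finset.sum_congr rfl fun n _ => Finset.sum_congr rfl fun i _ => ?_
        by_cases h : n ≤ β i <;> simp [h]

/-- **KKT sufficiency** for the time-varying problem (optimality conditions (25)–(27)):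
if `(rs, ls, lam, μ)` satisfies the time-varying KKT conditions (with nonnegative
multipliers), then `(rs, ls)` is a global minimizer of the total energy
`Σ_n ((e^{r_n} - 1)/g_n + ρ) l_n` among all feasible schedules. -/
theorem kkt_sufficiency_time_varying
    (ρ : ℝ) (hρ : 0 < ρ)
    (N A D : ℕ) (g : ℕ → ℝ) (hg : ∀ n ∈ Finset.Icc 1 N, 0 < g n)
    (L : ℕ → ℝ) (α : ℕ → ℕ) (a : ℕ → ℝ) (δ : ℕ → ℕ) (d : ℕ → ℝ)
    (hdata : SchedData N A D L α a δ d)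
    (rs ls lam μ : ℕ → ℝ)
    (hkkt : KKTtv ρ g N A D L α a δ d rs ls lam μ) :
    ∀ r l : ℕ → ℝ, Feasible N A D L α a δ d r l →
      ∑ n ∈ Finset.Icc 1 N, ((Real.exp (rs n) - 1) / g n + ρ) * ls n ≤
        ∑ n ∈ Finset.Icc 1 N, ((Real.exp (r n) - 1) / g n + ρ) * l n := by
  obtain ⟨hfeas_s, hlam, hmu, hmin, hcsA, hcsD⟩ := hkkt
  obtain ⟨hN, hL, hα0, hαA, hαmono, ha, haA, hδ1, hδD, hδmono, hd⟩ := hdata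
  intro r l hfeas
  obtain ⟨hbox, hcaus, hdead⟩ := hfeas
  obtain ⟨hbox_s, hcaus_s, hdead_s⟩ := hfeas_s
  have hαle : ∀ i ∈ Finset.Icc 1 A, α i ≤ N := by
    intro i hi
    simp only [Finset.mem_Icc] at hi
    have := kkt_mono_aux α A (fun j _ hj => hαmono j hj) i hi.1 hi.2
    omega
  have hδle : ∀ j ∈ Finset.Icc 1 D, δ j ≤ N := by
    intro j hj
    simp only [Finset.mem_Icc] at hj
    have := kkt_mono_aux δ D hδmono j hj.1 hj.2
    omega
  set W := weight A D α δ lam μ with hWdef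
  have hW : ∀ x : ℕ → ℝ, ∑ n ∈ Finset.Icc 1 N, W n * x n =
      ∑ j ∈ Finset.Icc 1 D, μ j * ∑ n ∈ Finset.Icc 1 (δ j), x n -
        ∑ i ∈ Finset.Icc 1 A, lam i * ∑ n ∈ Finset.Icc 1 (α i), x n := by
    intro x
    rw [kkt_swap N D δ hδle μ x, kkt_swap N A α hαle lam x, ← Finset.sum_sub_distrib]
    refine Finset.sum_congr rfl fun n _ => ?_
    simp only [hWdef, weight]
    ring
  have hLag : ∑ n ∈ Finset.Icc 1 N, (P (g n) (rs n) + ρ - W n * rs n) * ls n ≤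
      ∑ n ∈ Finset.Icc 1 N, (P (g n) (r n) + ρ - W n * r n) * l n :=
    Finset.sum_le_sum fun n hn =>
      hmin n hn (r n) (l n) (hbox n hn).1 (hbox n hn).2.1 (hbox n hn).2.2
  have expand : ∀ u v : ℕ → ℝ,
      ∑ n ∈ Finset.Icc 1 N, (P (g n) (u n) + ρ) * v n =
        ∑ n ∈ Finset.Icc 1 N, (P (g n) (u n) + ρ - W n * u n) * v n +
          ∑ n ∈ Finset.Icc 1 N, W n * (u n * v n) := by
    intro u v
    rw [← Finset.sum_add_distrib]
    refine Finset.sum_congr rfl fun n _ => by ring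
  have hCs : ∑ n ∈ Finset.Icc 1 N, W n * (rs n * ls n) =
      ∑ j ∈ Finset.Icc 1 D, μ j * ∑ k ∈ Finset.Icc 1 j, d k -
        ∑ i ∈ Finset.Icc 1 A, lam i * ∑ k ∈ Finset.range i, a k := by
    rw [hW (fun n => rs n * ls n)]
    have e1 : ∀ j ∈ Finset.Icc 1 D,
        μ j * ∑ n ∈ Finset.Icc 1 (δ j), rs n * ls n = μ j * ∑ k ∈ Finset.Icc 1 j, d k := by
      intro j hj
      have := hcsD j hj
      nlinarith [this]
    have e2 : ∀ i ∈ Finset.Icc 1 A,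
        lam i * ∑ n ∈ Finset.Icc 1 (α i), rs n * ls n = lam i * ∑ k ∈ Finset.range i, a k := by
      intro i hi
      have := hcsA i hi
      nlinarith [this]
    rw [Finset.sum_congr rfl e1, Finset.sum_congr rfl e2]
  have hC : ∑ j ∈ Finset.Icc 1 D, μ j * ∑ k ∈ Finset.Icc 1 j, d k -
        ∑ i ∈ Finset.Icc 1 A, lam i * ∑ k ∈ Finset.range i, a k ≤
      ∑ n ∈ Finset.Icc 1 N, W n * (r n * l n) := by
    rw [hW (fun n => r n * l n)]
    apply sub_le_sub
    · exact Finset.sum_le_sum fun j hj =>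
        mul_le_mul_of_nonneg_left (hdead j hj) (hmu j hj)
    · exact Finset.sum_le_sum fun i hi =>
        mul_le_mul_of_nonneg_left (hcaus i hi) (hlam i hi)
  have key : ∑ n ∈ Finset.Icc 1 N, (P (g n) (rs n) + ρ) * ls n ≤
      ∑ n ∈ Finset.Icc 1 N, (P (g n) (r n) + ρ) * l n := by
    rw [expand rs ls, expand r l, hCs]
    have := hLag
    linarith [hC, hLag]
  simpa only [P] using key
end

section
/- Per-epoch Lagrangian subproblem trichotomy: Let L > 0, w ∈ ℝ, and set w_ee = e^{r_ee}/g. Consider minimizing F(r, l) = (P(r) + ρ − w r)·l over r ≥ 0 and 0 ≤ l ≤ L. Then: (a) if w < w_ee, the minimum value is 0 and the minimizers are exactly the points with l = 0; (b) if w = w_ee, the minimum value is 0 and the minimizers are exactly the points with l = 0 together with the points (r_ee, l) for 0 ≤ l ≤ L; (c) if w > w_ee, the minimum value is (P(log(g w)) + ρ − w·log(g w))·L < 0 and the unique minimizer is (r, l) = (log(g w), L), where log(g w) > r_ee. -/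
open Real Finset

lemma conv_aux (a r : ℝ) : Real.exp a * ((r - a) + 1) ≤ Real.exp r := by
  have h := Real.add_one_le_exp (r - a)
  calc Real.exp a * ((r - a) + 1) ≤ Real.exp a * Real.exp (r - a) :=
        mul_le_mul_of_nonneg_left h (Real.exp_pos a).le
    _ = Real.exp r := by rw [← Real.exp_add]; ring_nf

lemma conv_aux' (a r : ℝ) (h : r ≠ a) : Real.exp a * ((r - a) + 1) < Real.exp r := by
  have h := Real.add_one_lt_exp (sub_ne_zero.mpr h)
  calc Real.exp a * ((r - a) + 1) < Real.exp a * Real.exp (r - a) :=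
        mul_lt_mul_of_pos_left h (Real.exp_pos a)
    _ = Real.exp r := by rw [← Real.exp_add]; ring_nf

/-- **Per-epoch Lagrangian subproblem trichotomy.** With `w_ee = e^{r_ee}/g` and
`F(r, l) = (P(r) + ρ - w r) l` minimized over `r ≥ 0`, `0 ≤ l ≤ L`:
(a) if `w < w_ee` the minimum value is `0`, attained exactly at the points with `l = 0`;
(b) if `w = w_ee` the minimum value is `0`, attained exactly at the points with `l = 0`
together with the points `(r_ee, l)`, `0 ≤ l ≤ L`;
(c) if `w > w_ee` the minimum value is `(P(log(gw)) + ρ - w log(gw)) L < 0`, attained at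
the unique point `(log(gw), L)`, where `log(gw) > r_ee`. -/
theorem per_epoch_trichotomy
    (g ρ ree L w : ℝ) (hg : 0 < g) (hρ : 0 < ρ) (hL : 0 < L)
    (hree_pos : 0 < ree)
    (hree_min : ∀ r : ℝ, 0 < r → r ≠ ree → xi g ρ ree < xi g ρ r) :
    (w < Real.exp ree / g →
      (∀ r l : ℝ, 0 ≤ r → 0 ≤ l → l ≤ L → 0 ≤ (P g r + ρ - w * r) * l) ∧
      (∀ r l : ℝ, 0 ≤ r → 0 ≤ l → l ≤ L → ((P g r + ρ - w * r) * l = 0 ↔ l = 0))) ∧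
    (w = Real.exp ree / g →
      (∀ r l : ℝ, 0 ≤ r → 0 ≤ l → l ≤ L → 0 ≤ (P g r + ρ - w * r) * l) ∧
      (∀ r l : ℝ, 0 ≤ r → 0 ≤ l → l ≤ L →
        ((P g r + ρ - w * r) * l = 0 ↔ (l = 0 ∨ r = ree)))) ∧
    (Real.exp ree / g < w →
      ree < Real.log (g * w) ∧
      (P g (Real.log (g * w)) + ρ - w * Real.log (g * w)) * L < 0 ∧
      (∀ r l : ℝ, 0 ≤ r → 0 ≤ l → l ≤ L →
        (P g (Real.log (g * w)) + ρ - w * Real.log (g * w)) * L ≤ (P g r + ρ - w * r) * l) ∧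
      (∀ r l : ℝ, 0 ≤ r → 0 ≤ l → l ≤ L →
        (P g r + ρ - w * r) * l =
          (P g (Real.log (g * w)) + ρ - w * Real.log (g * w)) * L →
        r = Real.log (g * w) ∧ l = L)) := by
  have hgne : g ≠ 0 := ne_of_gt hg
  have hreene : ree ≠ 0 := ne_of_gt hree_pos
  -- Key first-order identity at the EE-optimal rate.
  have hkey : (Real.exp ree - 1) / g + ρ = Real.exp ree / g * ree := by
    have hmin : IsLocalMin (xi g ρ) ree := by
      filter_upwards [eventually_gt_nhds hree_pos] with r hr
      rcases eq_or_ne r ree with h | h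
      · rw [h]
      · exact (hree_min r hr h).le
    have hd : HasDerivAt (xi g ρ)
        ((Real.exp ree / g * ree - ((Real.exp ree - 1) / g + ρ) * 1) / ree ^ 2) ree := by
      have h1 : HasDerivAt (fun r => (Real.exp r - 1) / g + ρ) (Real.exp ree / g) ree :=
        (((Real.hasDerivAt_exp ree).sub_const 1).div_const g).add_const ρ
      have h2 : HasDerivAt (fun r : ℝ => r) 1 ree := hasDerivAt_id ree
      exact h1.div h2 hreene
    have h0 := hmin.hasDerivAt_eq_zero hd
    have h2 : (ree : ℝ) ^ 2 ≠ 0 := pow_ne_zero _ hreene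
    field_simp at h0
    field_simp
    linarith
  have hρ' : ρ = Real.exp ree / g * ree - (Real.exp ree - 1) / g := by linarith
  -- φ relative to wee
  have hdiff : ∀ r : ℝ, P g r + ρ - Real.exp ree / g * r
      = (Real.exp r - Real.exp ree * ((r - ree) + 1)) / g := by
    intro r
    rw [P, hρ']
    field_simp
    ring
  have hphi_nonneg : ∀ r : ℝ, 0 ≤ P g r + ρ - Real.exp ree / g * r := by
    intro r
    rw [hdiff r]
    have h1 := conv_aux ree r
    exact div_nonneg (by linarith) hg.le
  have hphi_pos : ∀ r : ℝ, r ≠ ree → 0 < P g r + ρ - Real.exp ree / g * r := by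
    intro r hr
    rw [hdiff r]
    have := conv_aux' ree r hr
    have h2 : 0 < Real.exp r - Real.exp ree * ((r - ree) + 1) := by linarith
    exact div_pos h2 hg
  have hphi_ree : P g ree + ρ - Real.exp ree / g * ree = 0 := by
    rw [hdiff ree]; simp
  refine ⟨?_, ?_, ?_⟩
  · -- case (a)
    intro hw
    have hpos : ∀ r : ℝ, 0 ≤ r → 0 < P g r + ρ - w * r := by
      intro r hr
      rcases eq_or_ne r ree with h | h
      · subst h
        nlinarith [hphi_ree, mul_pos (sub_pos.mpr hw) hree_pos]
      · have h1 := hphi_pos r h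
        nlinarith [mul_le_mul_of_nonneg_right hw.le hr]
    constructor
    · intro r l hr hl _
      exact mul_nonneg (hpos r hr).le hl
    · intro r l hr _ _
      rw [mul_eq_zero]
      constructor
      · rintro (h | h)
        · exact absurd h (ne_of_gt (hpos r hr))
        · exact h
      · intro h; exact Or.inr h
  · -- case (b)
    intro hw
    subst hw
    constructor
    · intro r l _ hl _
      exact mul_nonneg (hphi_nonneg r) hl
    · intro r l _ _ _
      rw [mul_eq_zero]
      constructor
      · rintro (h | h)
        · right
          by_contra hne
          exact absurd h (ne_of_gt (hphi_pos r hne))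
        · exact Or.inl h
      · rintro (h | h)
        · exact Or.inr h
        · subst h; exact Or.inl hphi_ree
  · -- case (c)
    intro hw
    set s := Real.log (g * w) with hs
    have hgw : Real.exp ree < g * w := by
      have := (div_lt_iff₀ hg).mp hw
      linarith
    have hgwpos : 0 < g * w := lt_trans (Real.exp_pos ree) hgw
    have hwpos : 0 < w := by nlinarith
    have hes : Real.exp s = g * w := Real.exp_log hgwpos
    have hrees : ree < s := by
      rw [hs, ← Real.log_exp ree]
      exact Real.log_lt_log (Real.exp_pos ree) hgw
    have hweq : w = Real.exp s / g := by rw [hes]; field_simp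
    -- gap formula relative to s
    have hgap : ∀ r : ℝ, (P g r + ρ - w * r) - (P g s + ρ - w * s)
        = (Real.exp r - Real.exp s * ((r - s) + 1)) / g := by
      intro r
      rw [P, P, hweq]
      field_simp
      ring
    have hgap_nonneg : ∀ r : ℝ, P g s + ρ - w * s ≤ P g r + ρ - w * r := by
      intro r
      have h1 := conv_aux s r
      have h2 := hgap r
      nlinarith [div_nonneg (by linarith : (0:ℝ) ≤ Real.exp r - Real.exp s * ((r - s) + 1)) hg.le]
    have hgap_pos : ∀ r : ℝ, r ≠ s → P g s + ρ - w * s < P g r + ρ - w * r := by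
      intro r hr
      have h1 := conv_aux' s r hr
      have h2 := hgap r
      nlinarith [div_pos (by linarith : (0:ℝ) < Real.exp r - Real.exp s * ((r - s) + 1)) hg]
    -- value at s is negative
    have hvneg : P g s + ρ - w * s < 0 := by
      have h1 : P g ree + ρ - w * ree < 0 := by
        have : 0 < (w - Real.exp ree / g) * ree := mul_pos (by linarith) hree_pos
        nlinarith [hphi_ree]
      have h2 := hgap_nonneg ree
      linarith
    refine ⟨hrees, ?_, ?_, ?_⟩
    · exact mul_neg_of_neg_of_pos hvneg hL
    · intro r l hr hl hlL
      nlinarith [hgap_nonneg r, mul_nonneg (sub_nonneg.mpr (hgap_nonneg r)) hl,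
        mul_nonneg (neg_nonneg.mpr hvneg.le) (neg_nonneg.mpr (by linarith : l - L ≤ 0))]
    · intro r l hr hl hlL heq
      have hlL' : l = L := by
        by_contra hne
        have hlt : l < L := lt_of_le_of_ne hlL hne
        have t1 : 0 < (P g s + ρ - w * s) * (l - L) :=
          mul_pos_of_neg_of_neg hvneg (by linarith)
        have t2 : 0 ≤ (P g r + ρ - w * r - (P g s + ρ - w * s)) * l :=
          mul_nonneg (sub_nonneg.mpr (hgap_nonneg r)) hl
        nlinarith
      subst hlL'
      refine ⟨?_, rfl⟩
      by_contra hne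
      have := hgap_pos r hne
      nlinarith
end

section
/- Sign trichotomy of the marginal-energy expression (equation (A3)): For every r > 0, with P'(r) = e^r/g: if r < r_ee then P'(r)·r − (P(r) + ρ) < 0; if r = r_ee then P'(r)·r − (P(r) + ρ) = 0; and if r > r_ee then P'(r)·r − (P(r) + ρ) > 0. -/
open Real Finset

/-!
`ξ = (P + ρ)/r` has derivative `(P'(r)·r - (P(r) + ρ))/r²`, so its numerator, the marginal
energy, vanishes at the minimiser `r_ee`. The marginal energy has derivative `P''(r)·r = e^r r/g > 0`
on `r > 0`, so it is strictly increasing there and changes sign exactly at `r_ee`.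
-/

/-- The marginal-energy expression `P'(r)·r - (P(r) + ρ)` of equation (A3). -/
noncomputable def marginalEnergy (g ρ r : ℝ) : ℝ := Real.exp r / g * r - (P g r + ρ)

theorem mul_sub_eq_zero_of_isLocalMin_div_id {f : ℝ → ℝ} {f' r : ℝ} (hf : HasDerivAt f f' r)
    (hr : r ≠ 0) (hmin : IsLocalMin (fun x => f x / x) r) : f' * r - f r = 0 := by
  have hderiv := hmin.hasDerivAt_eq_zero (hf.div (hasDerivAt_id r) hr)
  simpa [pow_ne_zero, hr] using hderiv

theorem hasDerivAt_P (g r : ℝ) : HasDerivAt (P g) (Real.exp r / g) r :=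
  ((Real.hasDerivAt_exp r).sub_const 1).div_const g

theorem hasDerivAt_marginalEnergy (g ρ r : ℝ) :
    HasDerivAt (marginalEnergy g ρ) (Real.exp r * r / g) r := by
  have h := (((Real.hasDerivAt_exp r).div_const g).mul (hasDerivAt_id r)).sub
    ((hasDerivAt_P g r).add_const ρ)
  exact h.congr_deriv (by simp only [id]; ring)

theorem strictMonoOn_marginalEnergy {g : ℝ} (ρ : ℝ) (hg : 0 < g) :
    StrictMonoOn (marginalEnergy g ρ) (Set.Ici 0) := by
  apply strictMonoOn_of_deriv_pos (convex_Ici 0)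
  · exact fun x _ => (hasDerivAt_marginalEnergy g ρ x).continuousAt.continuousWithinAt
  · intro x hx
    have hx : 0 < x := by simpa using hx
    rw [(hasDerivAt_marginalEnergy g ρ x).deriv]
    positivity

theorem marginalEnergy_eq_zero_of_isLocalMin {g ρ r : ℝ} (hr : r ≠ 0)
    (hmin : IsLocalMin (xi g ρ) r) : marginalEnergy g ρ r = 0 :=
  mul_sub_eq_zero_of_isLocalMin_div_id ((hasDerivAt_P g r).add_const ρ) hr hmin

theorem marginal_energy_sign_trichotomy_general
    (g ρ ree : ℝ) (hg : 0 < g)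
    (hree_pos : 0 < ree)
    (hree_min : ∀ r : ℝ, 0 < r → r ≠ ree → xi g ρ ree < xi g ρ r) :
    ∀ r : ℝ, 0 < r →
      (r < ree → Real.exp r / g * r - (P g r + ρ) < 0) ∧
      (r = ree → Real.exp r / g * r - (P g r + ρ) = 0) ∧
      (ree < r → 0 < Real.exp r / g * r - (P g r + ρ)) := by
  have hmin : IsLocalMin (xi g ρ) ree := by
    filter_upwards [eventually_gt_nhds hree_pos] with r hr
    rcases eq_or_ne r ree with rfl | hne
    · exact le_rfl
    · exact (hree_min r hr hne).le
  have hzero : marginalEnergy g ρ ree = 0 := marginalEnergy_eq_zero_of_isLocalMin hree_pos.ne' hmin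
  have hmono := strictMonoOn_marginalEnergy ρ hg
  intro r hr
  refine ⟨fun hlt => ?_, fun heq => heq ▸ hzero, fun hgt => ?_⟩
  · exact hzero ▸ hmono (Set.mem_Ici.2 hr.le) (Set.mem_Ici.2 hree_pos.le) hlt
  · exact hzero ▸ hmono (Set.mem_Ici.2 hree_pos.le) (Set.mem_Ici.2 hr.le) hgt

/-- **Sign trichotomy of the marginal-energy expression (equation (A3)).**
For every `r > 0`, with `P'(r) = e^r/g`: the quantity `P'(r)·r - (P(r) + ρ)` is negative
for `r < r_ee`, zero at `r = r_ee`, and positive for `r > r_ee`. -/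
theorem marginal_energy_sign_trichotomy
    (g ρ ree : ℝ) (hg : 0 < g) (hρ : 0 < ρ)
    (hree_pos : 0 < ree)
    (hree_min : ∀ r : ℝ, 0 < r → r ≠ ree → xi g ρ ree < xi g ρ r) :
    ∀ r : ℝ, 0 < r →
      (r < ree → Real.exp r / g * r - (P g r + ρ) < 0) ∧
      (r = ree → Real.exp r / g * r - (P g r + ρ) = 0) ∧
      (ree < r → 0 < Real.exp r / g * r - (P g r + ρ)) :=
  marginal_energy_sign_trichotomy_general g ρ ree hg hree_pos hree_min
end

section
/- Strict unimodality of the energy-per-bit function: The function ξ(r) = (P(r) + ρ)/r is strictly decreasing on (0, r_ee] and strictly increasing on [r_ee, ∞); consequently ξ is quasi-convex on (0, ∞) and r_ee is its unique global minimizer. -/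
/-!
`P g + ρ` is convex. For a convex `φ` on `(0, ∞)` and any level `c`, the sublevel set
`{r > 0 | φ r / r ≤ c} = {r > 0 | φ r - c * r ≤ 0}` is convex, so `φ r / r` is quasi-convex.
Strictness comes from the same shift: if `φ z / z < φ x / x =: c`, the convex function
`φ - c * id` vanishes at `x` and is negative at `z`, hence negative strictly between them.
Applied with `z` the strict minimiser, this makes the ratio strictly decrease towards it and
strictly increase away from it.
-/

open Real Finset

open Set

namespace ConvexOn

variable {φ : ℝ → ℝ}

theorem quasiconvexOn_div_self (hφ : ConvexOn ℝ (Ioi 0) φ) :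
    QuasiconvexOn ℝ (Ioi 0) fun r => φ r / r := by
  intro c
  have hconv : ConvexOn ℝ (Ioi 0) fun r => φ r - c * r :=
    hφ.sub ((LinearMap.mul ℝ ℝ c).concaveOn (convex_Ioi 0))
  convert hconv.convex_le 0 using 3 with r
  exact and_congr_right fun hr => by rw [div_le_iff₀ hr, sub_nonpos]

theorem div_self_lt_of_mem_openSegment (hφ : ConvexOn ℝ (Ioi 0) φ) {x y z : ℝ}
    (hx : 0 < x) (hz : 0 < z) (hy : y ∈ openSegment ℝ x z) (hzx : φ z / z < φ x / x) :
    φ y / y < φ x / x := by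
  obtain ⟨a, b, ha, hb, hab, rfl⟩ := hy
  set c := φ x / x
  have hxc : φ x = c * x := (div_mul_cancel₀ _ hx.ne').symm
  have hzc : φ z < c * z := (div_lt_iff₀ hz).1 hzx
  rw [div_lt_iff₀ (by simp only [smul_eq_mul]; positivity)]
  calc φ (a • x + b • z) ≤ a • φ x + b • φ z := hφ.2 hx hz ha.le hb.le hab
    _ < c * (a • x + b • z) := by simp only [smul_eq_mul]; rw [hxc]; nlinarith

theorem strictAntiOn_div_self_of_forall_lt (hφ : ConvexOn ℝ (Ioi 0) φ) {m : ℝ}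
    (hm : ∀ r, 0 < r → r ≠ m → φ m / m < φ r / r) :
    StrictAntiOn (fun r => φ r / r) (Ioc 0 m) := by
  rintro x ⟨hx, -⟩ y ⟨hy, hym⟩ hxy
  rcases hym.eq_or_lt with rfl | hym
  · exact hm x hx hxy.ne
  · exact hφ.div_self_lt_of_mem_openSegment hx (hx.trans (hxy.trans hym))
      (Ioo_subset_openSegment ⟨hxy, hym⟩) (hm x hx (hxy.trans hym).ne)

theorem strictMonoOn_div_self_of_forall_lt (hφ : ConvexOn ℝ (Ioi 0) φ) {m : ℝ} (hm0 : 0 < m)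
    (hm : ∀ r, 0 < r → r ≠ m → φ m / m < φ r / r) :
    StrictMonoOn (fun r => φ r / r) (Ici m) := by
  rintro x hmx y - hxy
  have hy : 0 < y := hm0.trans_le (hmx.trans hxy.le)
  rcases (show m ≤ x from hmx).eq_or_lt with rfl | hmx
  · exact hm y hy hxy.ne'
  · refine hφ.div_self_lt_of_mem_openSegment hy hm0 ?_ (hm y hy (hmx.trans hxy).ne')
    exact openSegment_symm ℝ m y ▸ Ioo_subset_openSegment ⟨hmx, hxy⟩

end ConvexOn

theorem convexOn_P {g : ℝ} (hg : 0 < g) : ConvexOn ℝ univ (P g) := by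
  refine ((convexOn_exp.add_const (-1)).smul (inv_nonneg.2 hg.le)).congr fun r _ => ?_
  simp [P, div_eq_inv_mul, sub_eq_add_neg]

theorem xi_strict_unimodality_general
    (g ρ ree : ℝ) (hg : 0 < g)
    (hree_pos : 0 < ree)
    (hree_min : ∀ r : ℝ, 0 < r → r ≠ ree → xi g ρ ree < xi g ρ r) :
    StrictAntiOn (xi g ρ) (Set.Ioc 0 ree) ∧
    StrictMonoOn (xi g ρ) (Set.Ici ree) ∧
    QuasiconvexOn ℝ (Set.Ioi 0) (xi g ρ) ∧
    (∀ r : ℝ, 0 < r → xi g ρ ree ≤ xi g ρ r) ∧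
    (∀ r : ℝ, 0 < r → xi g ρ r = xi g ρ ree → r = ree) := by
  have hconv : ConvexOn ℝ (Ioi 0) fun r => P g r + ρ :=
    ((convexOn_P hg).add_const ρ).subset (subset_univ _) (convex_Ioi 0)
  refine ⟨hconv.strictAntiOn_div_self_of_forall_lt hree_min,
    hconv.strictMonoOn_div_self_of_forall_lt hree_pos hree_min,
    hconv.quasiconvexOn_div_self, fun r hr => ?_,
    fun r hr heq => by_contra fun hne => (hree_min r hr hne).ne' heq⟩
  rcases eq_or_ne r ree with rfl | hne
  · exact le_rfl
  · exact (hree_min r hr hne).le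

/-- **Strict unimodality of the energy-per-bit function.** `ξ(r) = (P(r) + ρ)/r` is
strictly decreasing on `(0, r_ee]` and strictly increasing on `[r_ee, ∞)`; consequently
`ξ` is quasi-convex on `(0, ∞)` and `r_ee` is its unique global minimizer there. -/
theorem xi_strict_unimodality
    (g ρ ree : ℝ) (hg : 0 < g) (hρ : 0 < ρ)
    (hree_pos : 0 < ree)
    (hree_min : ∀ r : ℝ, 0 < r → r ≠ ree → xi g ρ ree < xi g ρ r) :
    StrictAntiOn (xi g ρ) (Set.Ioc 0 ree) ∧
    StrictMonoOn (xi g ρ) (Set.Ici ree) ∧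
    QuasiconvexOn ℝ (Set.Ioi 0) (xi g ρ) ∧
    (∀ r : ℝ, 0 < r → xi g ρ ree ≤ xi g ρ r) ∧
    (∀ r : ℝ, 0 < r → xi g ρ r = xi g ρ ree → r = ree) :=
  xi_strict_unimodality_general g ρ ree hg hree_pos hree_min
end

section
/- Existence, uniqueness and characterization of the EE-maximizing rate: For every channel power gain g > 0 and circuit power ρ > 0 there exists a unique r > 0 satisfying (r − 1)e^r + 1 = g·ρ. This r is the unique global minimizer over (0, ∞) of ξ(r) = ((e^r − 1)/g + ρ)/r, and it satisfies the first-order condition P'(r)·r = P(r) + ρ, i.e., P'(r) = ξ(r), where P(r) = (e^r − 1)/g and P'(r) = e^r/g. -/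
open Real Finset

lemma xi_eq (g ρ r : ℝ) (hg : 0 < g) (hr : 0 < r)
    (heq : (r - 1) * Real.exp r + 1 = g * ρ) :
    Real.exp r / g * r = P g r + ρ ∧ Real.exp r / g = xi g ρ r := by
  have h1 : Real.exp r / g * r = P g r + ρ := by
    unfold P
    field_simp
    nlinarith [heq]
  refine ⟨h1, ?_⟩
  unfold xi
  rw [← h1]
  field_simp

lemma xi_min (g ρ r : ℝ) (hg : 0 < g) (hρ : 0 < ρ) (hr : 0 < r)
    (heq : (r - 1) * Real.exp r + 1 = g * ρ) :
    ∀ s : ℝ, 0 < s → s ≠ r → xi g ρ r < xi g ρ s := by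
  intro s hs hsr
  have hx := (xi_eq g ρ r hg hr heq).2
  rw [← hx]
  unfold xi P
  rw [lt_div_iff₀ hs]
  have hkey : s - r + 1 < Real.exp (s - r) := Real.add_one_lt_exp (by
    intro h; exact hsr (by linarith [sub_eq_zero.mp h]))
  have hexp : Real.exp (s - r) * Real.exp r = Real.exp s := by
    rw [← Real.exp_add]; ring_nf
  have her : 0 < Real.exp r := Real.exp_pos r
  have h2 : (s - r + 1) * Real.exp r < Real.exp s := by
    rw [← hexp]; exact mul_lt_mul_of_pos_right hkey her
  have hre : (Real.exp s - 1) / g + ρ = (Real.exp s - 1 + g * ρ) / g := by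
    field_simp
  rw [hre, div_mul_eq_mul_div, div_lt_div_iff_of_pos_right hg]
  nlinarith [h2]

/-- **Existence, uniqueness and characterization of the EE-maximizing rate.**
For every `g > 0` and `ρ > 0` there is a unique `r > 0` with `(r - 1)e^r + 1 = gρ`;
this `r` is the unique global minimizer of `ξ` on `(0, ∞)` and satisfies the first-order
condition `P'(r)·r = P(r) + ρ`, i.e. `P'(r) = ξ(r)`, where `P'(r) = e^r/g`. -/
theorem ree_exists_unique_characterization
    (g ρ : ℝ) (hg : 0 < g) (hρ : 0 < ρ) :
    (∃! r : ℝ, 0 < r ∧ (r - 1) * Real.exp r + 1 = g * ρ) ∧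
    (∀ r : ℝ, 0 < r → (r - 1) * Real.exp r + 1 = g * ρ →
      (∀ s : ℝ, 0 < s → s ≠ r → xi g ρ r < xi g ρ s) ∧
      Real.exp r / g * r = P g r + ρ ∧
      Real.exp r / g = xi g ρ r) := by
  constructor
  · -- existence via IVT on [0, 1 + gρ]
    have hcont : ContinuousOn (fun r : ℝ => (r - 1) * Real.exp r + 1)
        (Set.Icc 0 (1 + g * ρ)) := by fun_prop
    have hle : (0 : ℝ) ≤ 1 + g * ρ := by nlinarith
    have h0 : (fun r : ℝ => (r - 1) * Real.exp r + 1) 0 = 0 := by simp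
    have hM : g * ρ ≤ (fun r : ℝ => (r - 1) * Real.exp r + 1) (1 + g * ρ) := by
      have := Real.one_le_exp (by nlinarith : (0:ℝ) ≤ 1 + g * ρ)
      simp only
      nlinarith [mul_le_mul_of_nonneg_left this (le_of_lt (mul_pos hg hρ))]
    have hmem : g * ρ ∈ Set.Icc ((fun r : ℝ => (r - 1) * Real.exp r + 1) 0)
        ((fun r : ℝ => (r - 1) * Real.exp r + 1) (1 + g * ρ)) := by
      rw [h0]; exact ⟨by nlinarith, hM⟩
    obtain ⟨r, hrI, hr⟩ := intermediate_value_Icc hle hcont hmem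
    have hr0 : 0 < r := by
      rcases lt_or_eq_of_le hrI.1 with h | h
      · exact h
      · exfalso; rw [← h] at hr; simp at hr; rcases hr with h' | h' <;> nlinarith
    refine ⟨r, ⟨hr0, hr⟩, ?_⟩
    rintro y ⟨hy0, hy⟩
    by_contra hne
    have h1 := xi_min g ρ r hg hρ hr0 hr y hy0 hne
    have h2 := xi_min g ρ y hg hρ hy0 hy r hr0 (Ne.symm hne)
    linarith
  · intro r hr heq
    exact ⟨xi_min g ρ r hg hρ hr heq, xi_eq g ρ r hg hr heq⟩
end

section
/- Minimum energy to deliver a fixed data amount within a time budget (generalizing equation (20)): For every Φ > 0 and L > 0, the infimum of (P(r) + ρ)·l over all r > 0 and 0 < l ≤ L with r·l = Φ equals Φ·ξ(max{r_ee, Φ/L}), and it is attained at r = max{r_ee, Φ/L} and l = Φ/r. In particular, if Φ ≤ r_ee·L the minimum energy is Φ·(P(r_ee) + ρ)/r_ee = Φ·min_{r>0} (P(r) + ρ)/r. -/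
/-!
With `l = Φ / r` the energy is `Φ · ξ(r)` and the constraint `l ≤ L` reads `r ≥ Φ / L`.
Since `ξ(r) = g⁻¹ (e^r - 1 + gρ) / r` and `(e^r - 1 + c) / r` is convex on `(0, ∞)` for
`c ≥ 0` (the numerator of its second derivative is `e^r (r² - 2r + 2) - 2 + 2c ≥ 0`), `ξ`
increases to the right of its minimiser `r_ee`, so its minimum over `[Φ / L, ∞)` sits at
`max r_ee (Φ / L)`.
-/

open Real Finset

open Set

section MinOnHalfLine

variable {𝕜 β : Type*} [Field 𝕜] [LinearOrder 𝕜] [IsStrictOrderedRing 𝕜]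
  [AddCommMonoid β] [LinearOrder β] [IsOrderedCancelAddMonoid β] [Module 𝕜 β]
  [PosSMulStrictMono 𝕜 β] {s : Set 𝕜} {f : 𝕜 → β} {a t : 𝕜}

theorem ConvexOn.isMinOn_inter_Ici_max (hf : ConvexOn 𝕜 s f) (ha : a ∈ s)
    (hmin : IsMinOn f s a) : IsMinOn f (s ∩ Ici t) (max a t) := by
  rintro x ⟨hx, htx⟩
  rcases le_or_gt t a with hta | hat
  · rw [max_eq_left hta]
    exact hmin hx
  · rw [max_eq_right hat.le]
    have ht : t ∈ s := hf.1.ordConnected.out ha hx ⟨hat.le, htx⟩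
    exact hf.le_right_of_left_le'' ha hx hat htx (hmin ht)

end MinOnHalfLine

section ExpSubOneAddDiv

variable {c x : ℝ}

theorem hasDerivAt_exp_sub_one_add_div (c : ℝ) (hx : x ≠ 0) :
    HasDerivAt (fun x => (exp x - 1 + c) / x) ((x * exp x - (exp x - 1 + c)) / x ^ 2) x := by
  refine ((((hasDerivAt_exp x).sub_const 1).add_const c).div (hasDerivAt_id' x) hx).congr_deriv ?_
  ring

theorem hasDerivAt_deriv_exp_sub_one_add_div (c : ℝ) (hx : x ≠ 0) :
    HasDerivAt (fun x => (x * exp x - (exp x - 1 + c)) / x ^ 2)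
      ((exp x * (x ^ 2 - 2 * x + 2) - 2 + 2 * c) / x ^ 3) x := by
  have hnum : HasDerivAt (fun x => x * exp x - (exp x - 1 + c)) (x * exp x) x := by
    refine (((hasDerivAt_id' x).mul (hasDerivAt_exp x)).sub
      (((hasDerivAt_exp x).sub_const 1).add_const c)).congr_deriv ?_
    ring
  refine (hnum.div (hasDerivAt_pow 2 x) (pow_ne_zero 2 hx)).congr_deriv ?_
  field_simp
  ring

theorem two_le_exp_mul_sq_sub_two_mul_add_two (hx : 0 ≤ x) :
    2 ≤ exp x * (x ^ 2 - 2 * x + 2) := by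
  have hq : 0 ≤ x ^ 2 - 2 * x + 2 := by nlinarith [sq_nonneg (x - 1)]
  -- `(1 + x + x²/2) (x² - 2x + 2) = 2 + x⁴/2`
  calc 2 ≤ (1 + x + x ^ 2 / 2) * (x ^ 2 - 2 * x + 2) := by nlinarith [pow_two_nonneg (x ^ 2)]
    _ ≤ exp x * (x ^ 2 - 2 * x + 2) := by gcongr; exact quadratic_le_exp_of_nonneg hx

theorem convexOn_exp_sub_one_add_div (hc : 0 ≤ c) :
    ConvexOn ℝ (Ioi 0) (fun x => (exp x - 1 + c) / x) := by
  refine convexOn_of_hasDerivWithinAt2_nonneg (convex_Ioi 0)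
    (f' := fun x => (x * exp x - (exp x - 1 + c)) / x ^ 2)
    (f'' := fun x => (exp x * (x ^ 2 - 2 * x + 2) - 2 + 2 * c) / x ^ 3)
    (fun x hx =>
      (hasDerivAt_exp_sub_one_add_div c hx.ne').continuousAt.continuousWithinAt)
    (fun x hx => ?_) (fun x hx => ?_) (fun x hx => ?_)
  all_goals rw [interior_Ioi] at hx
  · exact (hasDerivAt_exp_sub_one_add_div c hx.ne').hasDerivWithinAt
  · exact (hasDerivAt_deriv_exp_sub_one_add_div c hx.ne').hasDerivWithinAt
  · have hx : (0 : ℝ) < x := hx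
    have h2 := two_le_exp_mul_sq_sub_two_mul_add_two hx.le
    exact div_nonneg (by linarith) (by positivity)

end ExpSubOneAddDiv

theorem convexOn_xi {g ρ : ℝ} (hg : 0 < g) (hρ : 0 ≤ ρ) : ConvexOn ℝ (Ioi 0) (xi g ρ) := by
  have hxi : xi g ρ = fun x => g⁻¹ * ((exp x - 1 + g * ρ) / x) := by
    ext x
    rw [xi, P]
    field_simp
  rw [hxi]
  exact (convexOn_exp_sub_one_add_div (by positivity)).smul (inv_nonneg.2 hg.le)

/-- **Minimum energy to deliver a fixed data amount within a time budget**
(generalizing equation (20)). For `Φ > 0` and `L > 0`, the infimum of `(P(r) + ρ) l`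
over all `r > 0`, `0 < l ≤ L` with `r l = Φ` equals `Φ · ξ(max(r_ee, Φ/L))`, attained at
`r = max(r_ee, Φ/L)`, `l = Φ/r`. In particular if `Φ ≤ r_ee L` the minimum energy is
`Φ (P(r_ee) + ρ)/r_ee`, which is `Φ` times the minimal energy-per-bit. -/
theorem min_energy_fixed_data
    (g ρ ree : ℝ) (hg : 0 < g) (hρ : 0 < ρ)
    (hree_pos : 0 < ree)
    (hree_min : ∀ r : ℝ, 0 < r → r ≠ ree → xi g ρ ree < xi g ρ r)
    (Φ L : ℝ) (hΦ : 0 < Φ) (hL : 0 < L) :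
    0 < Φ / max ree (Φ / L) ∧
    Φ / max ree (Φ / L) ≤ L ∧
    max ree (Φ / L) * (Φ / max ree (Φ / L)) = Φ ∧
    (P g (max ree (Φ / L)) + ρ) * (Φ / max ree (Φ / L)) = Φ * xi g ρ (max ree (Φ / L)) ∧
    (∀ r l : ℝ, 0 < r → 0 < l → l ≤ L → r * l = Φ →
      Φ * xi g ρ (max ree (Φ / L)) ≤ (P g r + ρ) * l) ∧
    (Φ ≤ ree * L →
      (P g (max ree (Φ / L)) + ρ) * (Φ / max ree (Φ / L)) = Φ * ((P g ree + ρ) / ree) ∧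
      (∀ r : ℝ, 0 < r → (P g ree + ρ) / ree ≤ (P g r + ρ) / r)) := by
  set m := max ree (Φ / L)
  have hm : 0 < m := hree_pos.trans_le (le_max_left _ _)
  have hxi_min : IsMinOn (xi g ρ) (Ioi 0) ree := isMinOn_iff.2 fun r hr => by
    rcases eq_or_ne r ree with rfl | hne
    exacts [le_rfl, (hree_min r hr hne).le]
  have hm_min : IsMinOn (xi g ρ) (Ioi 0 ∩ Ici (Φ / L)) m :=
    (convexOn_xi hg hρ.le).isMinOn_inter_Ici_max hree_pos hxi_min
  have henergy (r : ℝ) : (P g r + ρ) * (Φ / r) = Φ * xi g ρ r := by rw [xi]; ring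
  refine ⟨div_pos hΦ hm, (div_le_comm₀ hm hL).2 (le_max_right _ _), mul_div_cancel₀ _ hm.ne',
    henergy m, ?_, fun hΦL => ?_⟩
  · intro r l hr _ hlL hrl
    obtain rfl : l = Φ / r := eq_div_of_mul_eq hr.ne' (by rw [mul_comm, hrl])
    rw [henergy]
    exact mul_le_mul_of_nonneg_left (hm_min ⟨hr, (div_le_comm₀ hr hL).1 hlL⟩) hΦ.le
  · rw [show m = ree from max_eq_left ((div_le_iff₀ hL).2 hΦL)]
    exact ⟨henergy ree, fun r hr => hxi_min hr⟩
end

section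
/- Strict dominance of on-off transmission at the EE rate over any slower constant rate: For every rate 0 < r < r_ee and duration L > 0, delivering the data amount Φ = r·L by transmitting at rate r_ee for time l' = Φ/r_ee uses strictly less energy and satisfies l' < L: that is, l' < L and (P(r_ee) + ρ)·l' < (P(r) + ρ)·L. -/
open Real Finset

/-- **Strict dominance of on-off transmission at the EE rate over any slower constant
rate.** For `0 < r < r_ee` and `L > 0`, delivering the data amount `Φ = r L` by
transmitting at rate `r_ee` for time `l' = Φ/r_ee` satisfies `l' < L` and uses strictly
less energy: `(P(r_ee) + ρ) l' < (P(r) + ρ) L`. -/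
theorem onoff_dominates_slow_rate
    (g ρ ree : ℝ) (hg : 0 < g) (hρ : 0 < ρ)
    (hree_pos : 0 < ree)
    (hree_min : ∀ s : ℝ, 0 < s → s ≠ ree → xi g ρ ree < xi g ρ s)
    (r L : ℝ) (hr : 0 < r) (hrlt : r < ree) (hL : 0 < L) :
    r * L / ree < L ∧ (P g ree + ρ) * (r * L / ree) < (P g r + ρ) * L := by
  have hx := hree_min r hr (ne_of_lt hrlt)
  rw [xi, xi] at hx
  constructor
  · rw [div_lt_iff₀ hree_pos]
    nlinarith
  · have h1 : (P g ree + ρ) / ree * (r * L) < (P g r + ρ) / r * (r * L) := by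
      apply mul_lt_mul_of_pos_right hx (by positivity)
    calc (P g ree + ρ) * (r * L / ree) = (P g ree + ρ) / ree * (r * L) := by ring
      _ < (P g r + ρ) / r * (r * L) := h1
      _ = (P g r + ρ) * L := by field_simp
end
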